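/- arXiv:2211.01877 — 2 statements merged into one kernel-verified Lean document; each statement's English description precedes it below -/
import Mathlib

section
/- Let W be a symmetric nonnegative weight matrix whose associated graph (edges where w_{ij} > 0) is connected. Then there exists a finite λ₀ ≥ 0 such that for all λ ≥ λ₀, the global minimum of L(A) = κ_ε‖X − A‖² + λ·κ_pen·Σ_{i<j} w_{ij}‖a_i − a_j‖ is attained at A = 1·x̄ᵀ, where x̄ is the mean of the rows of X. -/
/-!
Connectedness lets the fusion penalty `P(A)` control the oscillation of `A`: along a path
every edge difference `‖a_u - a_v‖` is at most `P(A) / w_uv`, so all `‖a_i - a_j‖` are at most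
`n c P(A)` with `c = ∑ w_ij⁻¹`. Expanding the fit term around `x̄` and using `∑ (x_i - x̄) = 0`,
the fit of `A` beats that of `1 x̄ᵀ` by at most `2 (∑ ‖x_i - x̄‖) n c P(A)`, which is linear in
`P(A)`; once `λ κ_pen ≥ 2 κ_ε n c ∑ ‖x_i - x̄‖` the penalty term pays for it.
-/

/-- The graph associated with a nonnegative weight matrix: an edge between `i ≠ j`
whenever the weight between them is positive (symmetrized). -/
def weightGraph (n : ℕ) (w : Fin n → Fin n → ℝ) : SimpleGraph (Fin n) where
  Adj i j := i ≠ j ∧ (0 < w i j ∨ 0 < w j i)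
  symm := by constructor; intro i j ⟨hne, hw⟩; exact ⟨hne.symm, hw.symm⟩
  loopless := by constructor; intro i ⟨hne, _⟩; exact hne rfl

open Finset
open scoped RealInnerProductSpace

theorem SimpleGraph.Walk.norm_sub_le_length_mul {V E : Type*} [SeminormedAddCommGroup E]
    {G : SimpleGraph V} {f : V → E} {B : ℝ} (hB : ∀ u v, G.Adj u v → ‖f u - f v‖ ≤ B)
    {i j : V} (p : G.Walk i j) : ‖f i - f j‖ ≤ p.length * B := by
  induction p with
  | nil => simp
  | cons hadj _ ih =>
    rw [SimpleGraph.Walk.length_cons, Nat.cast_succ, add_mul, one_mul, add_comm]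
    exact (norm_sub_le_norm_sub_add_norm_sub _ _ _).trans (add_le_add (hB _ _ hadj) ih)

theorem SimpleGraph.Connected.norm_sub_le_card_mul {V E : Type*} [Fintype V]
    [SeminormedAddCommGroup E] {G : SimpleGraph V} (hG : G.Connected) {f : V → E} {B : ℝ}
    (hB₀ : 0 ≤ B) (hB : ∀ u v, G.Adj u v → ‖f u - f v‖ ≤ B) (i j : V) :
    ‖f i - f j‖ ≤ Fintype.card V * B := by
  classical
  obtain ⟨p⟩ := hG.preconnected i j
  calc ‖f i - f j‖ ≤ (p.toPath : G.Walk i j).length * B := p.toPath.1.norm_sub_le_length_mul hB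
    _ ≤ Fintype.card V * B := by
        gcongr
        exact p.toPath.2.length_lt.le

section FusionPenalty

variable {ι E : Type*} [Fintype ι] [LinearOrder ι] [SeminormedAddCommGroup E]

def fusionPenalty (w : ι → ι → ℝ) (A : ι → E) : ℝ :=
  ∑ i, ∑ j, if i < j then w i j * ‖A i - A j‖ else 0

variable {w : ι → ι → ℝ}

theorem fusionPenalty_const (w : ι → ι → ℝ) (a : E) : fusionPenalty w (fun _ => a) = 0 := by
  simp [fusionPenalty]

theorem weight_mul_norm_sub_le_fusionPenalty (hw : ∀ i j, 0 ≤ w i j) (A : ι → E) {i j : ι}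
    (hij : i < j) : w i j * ‖A i - A j‖ ≤ fusionPenalty w A := by
  have hterm : ∀ k l, 0 ≤ if k < l then w k l * ‖A k - A l‖ else 0 := fun k l =>
    ite_nonneg (mul_nonneg (hw k l) (norm_nonneg _)) le_rfl
  calc w i j * ‖A i - A j‖ = if i < j then w i j * ‖A i - A j‖ else 0 := (if_pos hij).symm
    _ ≤ ∑ l, if i < l then w i l * ‖A i - A l‖ else 0 :=
        single_le_sum (fun l _ => hterm i l) (mem_univ j)
    _ ≤ fusionPenalty w A :=
        single_le_sum (f := fun k => ∑ l, if k < l then w k l * ‖A k - A l‖ else 0)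
          (fun k _ => sum_nonneg fun l _ => hterm k l) (mem_univ i)

theorem fusionPenalty_nonneg (hw : ∀ i j, 0 ≤ w i j) (A : ι → E) : 0 ≤ fusionPenalty w A :=
  sum_nonneg fun i _ => sum_nonneg fun j _ =>
    ite_nonneg (mul_nonneg (hw i j) (norm_nonneg _)) le_rfl

end FusionPenalty

/-- Since `(w i j)⁻¹ = 0` when `w i j = 0`, this sum dominates `1 / w u v` for every positive
weight, without a minimum over a possibly empty set of edges. -/
theorem norm_sub_le_fusionPenalty_mul_of_adj {n : ℕ} {E : Type*} [SeminormedAddCommGroup E]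
    {w : Fin n → Fin n → ℝ} (hw : ∀ i j, 0 ≤ w i j) (hsymm : ∀ i j, w i j = w j i)
    (A : Fin n → E) {u v : Fin n} (huv : (weightGraph n w).Adj u v) :
    ‖A u - A v‖ ≤ fusionPenalty w A * ∑ i, ∑ j, (w i j)⁻¹ := by
  obtain ⟨hne, hpos⟩ := huv
  have hwuv : 0 < w u v := hpos.elim id fun h => hsymm u v ▸ h
  have hedge : w u v * ‖A u - A v‖ ≤ fusionPenalty w A := by
    rcases hne.lt_or_gt with h | h
    · exact weight_mul_norm_sub_le_fusionPenalty hw A h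
    · rw [hsymm, norm_sub_rev]
      exact weight_mul_norm_sub_le_fusionPenalty hw A h
  have hinv : (w u v)⁻¹ ≤ ∑ i, ∑ j, (w i j)⁻¹ :=
    (single_le_sum (f := fun j => (w u j)⁻¹) (fun j _ => inv_nonneg.2 (hw u j))
      (mem_univ v)).trans
      (single_le_sum (f := fun i => ∑ j, (w i j)⁻¹)
        (fun i _ => sum_nonneg fun j _ => inv_nonneg.2 (hw i j)) (mem_univ u))
  calc ‖A u - A v‖ ≤ fusionPenalty w A * (w u v)⁻¹ := by
        rw [← div_eq_mul_inv, le_div_iff₀ hwuv, mul_comm]; exact hedge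
    _ ≤ fusionPenalty w A * ∑ i, ∑ j, (w i j)⁻¹ :=
        mul_le_mul_of_nonneg_left hinv (fusionPenalty_nonneg hw A)

section Mean

variable {ι F : Type*} [Fintype ι] [NormedAddCommGroup F] [InnerProductSpace ℝ F]

theorem sum_sub_mean_eq_zero {M : Type*} [AddCommGroup M] [Module ℝ M] (X : ι → M) :
    ∑ i, (X i - (Fintype.card ι : ℝ)⁻¹ • ∑ j, X j) = 0 := by
  rcases isEmpty_or_nonempty ι with hι | hι
  · simp
  · rw [sum_sub_distrib, sum_const, card_univ, ← Nat.cast_smul_eq_nsmul ℝ,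
      smul_inv_smul₀ (by positivity), sub_self]

theorem sum_inner_le_of_sum_eq_zero {D A : ι → F} (hD : ∑ i, D i = 0) {M : ℝ}
    (hA : ∀ i j, ‖A i - A j‖ ≤ M) (y : F) : ∑ i, ⟪D i, A i - y⟫ ≤ (∑ i, ‖D i‖) * M := by
  rcases isEmpty_or_nonempty ι with hι | hι
  · simp
  obtain ⟨i₀⟩ := hι
  have hshift : ∑ i, ⟪D i, A i - y⟫ = ∑ i, ⟪D i, A i - A i₀⟫ := by
    have hsplit : ∀ i, ⟪D i, A i - y⟫ = ⟪D i, A i - A i₀⟫ + ⟪D i, A i₀ - y⟫ := fun i => by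
      rw [← inner_add_right, sub_add_sub_cancel]
    rw [sum_congr rfl fun i _ => hsplit i, sum_add_distrib, ← sum_inner, hD, inner_zero_left,
      add_zero]
  rw [hshift, sum_mul]
  gcongr with i
  exact (real_inner_le_norm _ _).trans
    (mul_le_mul_of_nonneg_left (hA i i₀) (norm_nonneg _))

theorem sum_norm_sub_mean_sq_le {X A : ι → F} {M : ℝ} (hA : ∀ i j, ‖A i - A j‖ ≤ M) :
    ∑ i, ‖X i - (Fintype.card ι : ℝ)⁻¹ • ∑ j, X j‖ ^ 2 ≤
      ∑ i, ‖X i - A i‖ ^ 2 + 2 * (∑ i, ‖X i - (Fintype.card ι : ℝ)⁻¹ • ∑ j, X j‖) * M := by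
  set xbar := (Fintype.card ι : ℝ)⁻¹ • ∑ j, X j
  have hpoint : ∀ i, ‖X i - xbar‖ ^ 2 ≤ ‖X i - A i‖ ^ 2 + 2 * ⟪X i - xbar, A i - xbar⟫ :=
    fun i => by
      have h := norm_sub_sq_real (X i - xbar) (A i - xbar)
      rw [sub_sub_sub_cancel_right] at h
      nlinarith [sq_nonneg ‖A i - xbar‖]
  have hcross := sum_inner_le_of_sum_eq_zero (sum_sub_mean_eq_zero X) hA xbar
  calc ∑ i, ‖X i - xbar‖ ^ 2 ≤ ∑ i, (‖X i - A i‖ ^ 2 + 2 * ⟪X i - xbar, A i - xbar⟫) :=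
        sum_le_sum fun i _ => hpoint i
    _ = ∑ i, ‖X i - A i‖ ^ 2 + 2 * ∑ i, ⟪X i - xbar, A i - xbar⟫ := by
        rw [sum_add_distrib, mul_sum]
    _ ≤ _ := by linarith

end Mean

theorem min_at_grand_mean_of_connected_general
    (n p : ℕ) (X : Fin n → EuclideanSpace ℝ (Fin p))
    (κε κpen : ℝ) (hκε : 0 < κε) (hκpen : 0 < κpen)
    (w : Fin n → Fin n → ℝ) (hw : ∀ i j, 0 ≤ w i j) (hsymm : ∀ i j, w i j = w j i)
    (hconn : (weightGraph n w).Connected)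
    (L : ℝ → (Fin n → EuclideanSpace ℝ (Fin p)) → ℝ)
    (hL : ∀ lam A, L lam A = κε * (∑ i, ‖X i - A i‖ ^ 2) +
      lam * κpen * ∑ i, ∑ j, if i < j then w i j * ‖A i - A j‖ else 0) :
    ∃ lam₀ : ℝ, 0 ≤ lam₀ ∧ ∀ lam ≥ lam₀,
      ∀ A, L lam (fun _ => (n : ℝ)⁻¹ • ∑ i, X i) ≤ L lam A := by
  set c := ∑ i, ∑ j, (w i j)⁻¹
  set C := ∑ i, ‖X i - (n : ℝ)⁻¹ • ∑ j, X j‖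
  have hc : 0 ≤ c := sum_nonneg fun i _ => sum_nonneg fun j _ => inv_nonneg.2 (hw i j)
  have hC : 0 ≤ C := sum_nonneg fun i _ => norm_nonneg _
  refine ⟨2 * κε * C * n * c / κpen, by positivity, fun lam hlam A => ?_⟩
  have hlam' : 2 * κε * C * n * c ≤ lam * κpen := (div_le_iff₀ hκpen).1 hlam
  have hP := fusionPenalty_nonneg hw A
  have hosc : ∀ i j, ‖A i - A j‖ ≤ n * (fusionPenalty w A * c) := fun i j => by
    simpa using hconn.norm_sub_le_card_mul (by positivity)
      (fun u v huv => norm_sub_le_fusionPenalty_mul_of_adj hw hsymm A huv) i j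
  have hfit := sum_norm_sub_mean_sq_le (X := X) hosc
  simp only [Fintype.card_fin] at hfit
  rw [hL, hL]
  change κε * _ + lam * κpen * fusionPenalty w _ ≤ κε * _ + lam * κpen * fusionPenalty w A
  rw [fusionPenalty_const]
  nlinarith [mul_le_mul_of_nonneg_right hlam' hP, mul_le_mul_of_nonneg_left hfit hκε.le]

theorem min_at_grand_mean_of_connected
    (n p : ℕ) (hn : 0 < n) (X : Fin n → EuclideanSpace ℝ (Fin p))
    (κε κpen : ℝ) (hκε : 0 < κε) (hκpen : 0 < κpen)
    (w : Fin n → Fin n → ℝ) (hw : ∀ i j, 0 ≤ w i j) (hsymm : ∀ i j, w i j = w j i)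
    (hconn : (weightGraph n w).Connected)
    (L : ℝ → (Fin n → EuclideanSpace ℝ (Fin p)) → ℝ)
    (hL : ∀ lam A, L lam A = κε * (∑ i, ‖X i - A i‖ ^ 2) +
      lam * κpen * ∑ i, ∑ j, if i < j then w i j * ‖A i - A j‖ else 0) :
    ∃ lam₀ : ℝ, 0 ≤ lam₀ ∧ ∀ lam ≥ lam₀,
      ∀ A, L lam (fun _ => (n : ℝ)⁻¹ • ∑ i, X i) ≤ L lam A :=
  min_at_grand_mean_of_connected_general n p X κε κpen hκε hκpen w hw hsymm hconn L hL
end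

section
/- Define Σ_k = m_k − m_new and the difference in fidelity terms Γ₁ = Σ_{i∈C_k}(‖x_i − m_k‖² − ‖x_i − m_new‖²) + Σ_{i∈C_l}(‖x_i − m_l‖² − ‖x_i − m_new‖²) with m_new the weighted average of m_k, m_l by cluster sizes. Then |Γ₁| ≤ (|C_k||C_l|/(|C_k|+|C_l|))·ε_f² + (2/(|C_k|+|C_l|))·(|C_l|·Σ_{i∈C_k}‖x_i − m_k‖ + |C_k|·Σ_{i∈C_l}‖x_i − m_l‖)·ε_f, provided ‖m_k − m_l‖ ≤ ε_f. -/
open Finset in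
private lemma aux_term_bound {p : ℕ} (a d : EuclideanSpace ℝ (Fin p)) :
    |‖a‖ ^ 2 - ‖a + d‖ ^ 2| ≤ 2 * ‖a‖ * ‖d‖ + ‖d‖ ^ 2 := by
  have h := @norm_add_sq_real (EuclideanSpace ℝ (Fin p)) _ _ a d
  have h2 := abs_real_inner_le_norm a d
  rw [abs_le] at h2 ⊢
  constructor <;> nlinarith [h2.1, h2.2]

theorem fidelity_difference_bound
    (p : ℕ) (nk nl : ℕ) (hnk : 0 < nk) (hnl : 0 < nl)
    (xk : Fin nk → EuclideanSpace ℝ (Fin p)) (xl : Fin nl → EuclideanSpace ℝ (Fin p))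
    (mk ml : EuclideanSpace ℝ (Fin p)) (εf : ℝ) (hε : ‖mk - ml‖ ≤ εf)
    (mnew : EuclideanSpace ℝ (Fin p))
    (hmnew : mnew = ((nk : ℝ) + nl)⁻¹ • ((nk : ℝ) • mk + (nl : ℝ) • ml))
    (Γ₁ : ℝ)
    (hΓ₁ : Γ₁ = (∑ i, (‖xk i - mk‖ ^ 2 - ‖xk i - mnew‖ ^ 2)) +
      ∑ i, (‖xl i - ml‖ ^ 2 - ‖xl i - mnew‖ ^ 2)) :
    |Γ₁| ≤ ((nk : ℝ) * nl / ((nk : ℝ) + nl)) * εf ^ 2 +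
      (2 / ((nk : ℝ) + nl)) *
        ((nl : ℝ) * (∑ i, ‖xk i - mk‖) + (nk : ℝ) * ∑ i, ‖xl i - ml‖) * εf := by
  have hNk : (0:ℝ) < nk := Nat.cast_pos.mpr hnk
  have hNl : (0:ℝ) < nl := Nat.cast_pos.mpr hnl
  have hN : (0:ℝ) < (nk:ℝ) + nl := by linarith
  have hε0 : 0 ≤ εf := le_trans (norm_nonneg _) hε
  set dk : EuclideanSpace ℝ (Fin p) := mk - mnew with hdk_def
  set dl : EuclideanSpace ℝ (Fin p) := ml - mnew with hdl_def
  have hdk : dk = ((nl:ℝ) / ((nk:ℝ) + nl)) • (mk - ml) := by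
    rw [hdk_def, hmnew]
    match_scalars <;> field_simp <;> ring
  have hdl : dl = ((nk:ℝ) / ((nk:ℝ) + nl)) • (ml - mk) := by
    rw [hdl_def, hmnew]
    match_scalars <;> field_simp <;> ring
  have hndk : ‖dk‖ ≤ (nl:ℝ) * εf / ((nk:ℝ) + nl) := by
    rw [hdk, norm_smul, Real.norm_eq_abs, abs_of_nonneg (by positivity)]
    rw [div_mul_eq_mul_div, mul_div_assoc, mul_div_assoc]
    gcongr
  have hndl : ‖dl‖ ≤ (nk:ℝ) * εf / ((nk:ℝ) + nl) := by
    rw [hdl, norm_smul, Real.norm_eq_abs, abs_of_nonneg (by positivity)]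
    rw [div_mul_eq_mul_div, mul_div_assoc, mul_div_assoc]
    have : ‖ml - mk‖ ≤ εf := by rwa [norm_sub_rev]
    gcongr
  have hk : ∀ i, |‖xk i - mk‖ ^ 2 - ‖xk i - mnew‖ ^ 2| ≤
      2 * ‖xk i - mk‖ * ‖dk‖ + ‖dk‖ ^ 2 := by
    intro i
    have h : xk i - mnew = (xk i - mk) + dk := by rw [hdk_def]; abel
    rw [h]; exact aux_term_bound _ _
  have hl : ∀ i, |‖xl i - ml‖ ^ 2 - ‖xl i - mnew‖ ^ 2| ≤
      2 * ‖xl i - ml‖ * ‖dl‖ + ‖dl‖ ^ 2 := by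
    intro i
    have h : xl i - mnew = (xl i - ml) + dl := by rw [hdl_def]; abel
    rw [h]; exact aux_term_bound _ _
  have habs : |Γ₁| ≤ (∑ i, (2 * ‖xk i - mk‖ * ‖dk‖ + ‖dk‖ ^ 2)) +
      ∑ i, (2 * ‖xl i - ml‖ * ‖dl‖ + ‖dl‖ ^ 2) := by
    rw [hΓ₁]
    calc |(∑ i, (‖xk i - mk‖ ^ 2 - ‖xk i - mnew‖ ^ 2)) +
        ∑ i, (‖xl i - ml‖ ^ 2 - ‖xl i - mnew‖ ^ 2)|
        ≤ (∑ i, |‖xk i - mk‖ ^ 2 - ‖xk i - mnew‖ ^ 2|) +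
          ∑ i, |‖xl i - ml‖ ^ 2 - ‖xl i - mnew‖ ^ 2| := by
          refine le_trans (abs_add_le _ _) ?_
          gcongr <;> exact Finset.abs_sum_le_sum_abs _ _
      _ ≤ _ := by gcongr <;> [exact hk _; exact hl _]
  have hsumk : (∑ i, (2 * ‖xk i - mk‖ * ‖dk‖ + ‖dk‖ ^ 2)) =
      2 * ‖dk‖ * (∑ i, ‖xk i - mk‖) + (nk:ℝ) * ‖dk‖ ^ 2 := by
    rw [Finset.sum_add_distrib, Finset.sum_const, nsmul_eq_mul, Finset.mul_sum]
    congr 1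
    · exact Finset.sum_congr rfl (fun _ _ => by ring)
    · simp [Finset.card_univ]
  have hsuml : (∑ i, (2 * ‖xl i - ml‖ * ‖dl‖ + ‖dl‖ ^ 2)) =
      2 * ‖dl‖ * (∑ i, ‖xl i - ml‖) + (nl:ℝ) * ‖dl‖ ^ 2 := by
    rw [Finset.sum_add_distrib, Finset.sum_const, nsmul_eq_mul, Finset.mul_sum]
    congr 1
    · exact Finset.sum_congr rfl (fun _ _ => by ring)
    · simp [Finset.card_univ]
  rw [hsumk, hsuml] at habs
  have hSk : (0:ℝ) ≤ ∑ i, ‖xk i - mk‖ := Finset.sum_nonneg fun i _ => norm_nonneg _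
  have hSl : (0:ℝ) ≤ ∑ i, ‖xl i - ml‖ := Finset.sum_nonneg fun i _ => norm_nonneg _
  have hdk0 : (0:ℝ) ≤ ‖dk‖ := norm_nonneg _
  have hdl0 : (0:ℝ) ≤ ‖dl‖ := norm_nonneg _
  refine le_trans habs ?_
  have h1 : 2 * ‖dk‖ * (∑ i, ‖xk i - mk‖) ≤
      2 * ((nl:ℝ) * εf / ((nk:ℝ) + nl)) * (∑ i, ‖xk i - mk‖) :=
    mul_le_mul_of_nonneg_right (mul_le_mul_of_nonneg_left hndk (by norm_num)) hSk
  have h2 : 2 * ‖dl‖ * (∑ i, ‖xl i - ml‖) ≤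
      2 * ((nk:ℝ) * εf / ((nk:ℝ) + nl)) * (∑ i, ‖xl i - ml‖) :=
    mul_le_mul_of_nonneg_right (mul_le_mul_of_nonneg_left hndl (by norm_num)) hSl
  have h3 : (nk:ℝ) * ‖dk‖ ^ 2 ≤ (nk:ℝ) * ((nl:ℝ) * εf / ((nk:ℝ) + nl)) ^ 2 :=
    mul_le_mul_of_nonneg_left (pow_le_pow_left₀ hdk0 hndk 2) hNk.le
  have h4 : (nl:ℝ) * ‖dl‖ ^ 2 ≤ (nl:ℝ) * ((nk:ℝ) * εf / ((nk:ℝ) + nl)) ^ 2 :=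
    mul_le_mul_of_nonneg_left (pow_le_pow_left₀ hdl0 hndl 2) hNl.le
  have key : (nk:ℝ) * ((nl:ℝ) * εf / ((nk:ℝ) + nl)) ^ 2 +
      (nl:ℝ) * ((nk:ℝ) * εf / ((nk:ℝ) + nl)) ^ 2 =
      ((nk : ℝ) * nl / ((nk : ℝ) + nl)) * εf ^ 2 := by
    field_simp
    ring
  have key2 : 2 * ((nl:ℝ) * εf / ((nk:ℝ) + nl)) * (∑ i, ‖xk i - mk‖) +
      2 * ((nk:ℝ) * εf / ((nk:ℝ) + nl)) * (∑ i, ‖xl i - ml‖) =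
      (2 / ((nk : ℝ) + nl)) *
        ((nl : ℝ) * (∑ i, ‖xk i - mk‖) + (nk : ℝ) * ∑ i, ‖xl i - ml‖) * εf := by
    field_simp
  linarith
end
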